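/- Let f and c₁, ..., c_J be mutually independent real-valued Gaussian random variables with f ~ N(μ_f, σ_f²), σ_f > 0, and c_j ~ N(μ_{c_j}, σ_{c_j}²), σ_{c_j} > 0. Define the improvement I = max(0, f* - f) if c_j ≤ 0 for all j, and I = 0 otherwise. Then E[I] = (σ_f z Φ(z) + σ_f φ(z)) ∏_{j=1}^J Φ(-μ_{c_j}/σ_{c_j}), where z = (f* - μ_f)/σ_f. -/

import Mathlib

/-!
Since `f` and the `cⱼ` are independent, the constrained improvement factors as
`max(0, f* - f) · ∏ⱼ 1{cⱼ ≤ 0}`, so its expectation is the unconstrained expected improvement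
times `∏ⱼ P(cⱼ ≤ 0) = ∏ⱼ Φ(-μⱼ/σⱼ)`. Writing `f = μ_f + σ_f Z` with `Z` standard normal reduces
the first factor to `σ_f E[max(0, z - Z)] = σ_f (z Φ(z) + φ(z))`, the last step being an
integration by parts through `φ'(x) = -x φ(x)`.
-/

open MeasureTheory ProbabilityTheory

/-- Standard normal CDF. -/
noncomputable def stdNormalCDF (z : ℝ) : ℝ :=
  ((gaussianReal 0 1) (Set.Iic z)).toReal

/-- Standard normal density. -/
noncomputable def stdNormalPDF (z : ℝ) : ℝ :=
  (Real.sqrt (2 * Real.pi))⁻¹ * Real.exp (-z ^ 2 / 2)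

open Real Set Filter
open scoped NNReal Topology

lemma gaussianPDFReal_zero_one : gaussianPDFReal 0 1 = stdNormalPDF := by
  funext x
  simp [gaussianPDFReal, stdNormalPDF, neg_div]

lemma hasDerivAt_stdNormalPDF (x : ℝ) : HasDerivAt stdNormalPDF (-x * stdNormalPDF x) x := by
  have hexp : HasDerivAt (fun y : ℝ => -y ^ 2 / 2) (-x) x :=
    ((hasDerivAt_pow 2 x).neg.div_const 2).congr_deriv (by push_cast; ring)
  exact (hexp.exp.const_mul (√(2 * π))⁻¹).congr_deriv (by simp only [stdNormalPDF]; ring)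

lemma tendsto_stdNormalPDF_atBot : Tendsto stdNormalPDF atBot (𝓝 0) := by
  have hsq : Tendsto (fun x : ℝ => x ^ 2) atBot atTop := by
    simpa only [Function.comp_def, neg_sq] using
      (tendsto_pow_atTop (α := ℝ) two_ne_zero).comp tendsto_neg_atBot_atTop
  have hexp := (tendsto_exp_atBot.comp
    ((tendsto_neg_atTop_atBot.comp hsq).atBot_div_const two_pos)).const_mul (√(2 * π))⁻¹
  rw [mul_zero] at hexp
  exact hexp

lemma integrable_mul_stdNormalPDF : Integrable fun x => x * stdNormalPDF x := by
  refine ((integrable_mul_exp_neg_mul_sq (b := 1 / 2) one_half_pos).const_mul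
    (√(2 * π))⁻¹).congr (ae_of_all _ fun x => ?_)
  simp only [stdNormalPDF]
  ring_nf

lemma integral_Iic_mul_stdNormalPDF (z : ℝ) :
    ∫ x in Iic z, x * stdNormalPDF x = -stdNormalPDF z := by
  have hderiv (x : ℝ) :=
    (hasDerivAt_stdNormalPDF x).neg.congr_deriv (by ring : _ = x * stdNormalPDF x)
  simpa using integral_Iic_of_hasDerivAt_of_tendsto (m := 0)
    (hderiv z).continuousAt.continuousWithinAt (fun x _ => hderiv x)
    integrable_mul_stdNormalPDF.integrableOn
    (by rw [← neg_zero]; exact tendsto_stdNormalPDF_atBot.neg)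

lemma stdNormalCDF_eq_integral (z : ℝ) : stdNormalCDF z = ∫ x in Iic z, stdNormalPDF x := by
  rw [stdNormalCDF, gaussianReal_apply_eq_integral 0 one_ne_zero, gaussianPDFReal_zero_one,
    ENNReal.toReal_ofReal]
  exact setIntegral_nonneg measurableSet_Iic fun x _ => by
    rw [← gaussianPDFReal_zero_one]; exact gaussianPDFReal_nonneg 0 1 x

lemma integral_max_zero_sub_gaussianReal_zero_one (z : ℝ) :
    ∫ x, max 0 (z - x) ∂gaussianReal 0 1 = z * stdNormalCDF z + stdNormalPDF z := by
  have hpdf : Integrable stdNormalPDF := gaussianPDFReal_zero_one ▸ integrable_gaussianPDFReal 0 1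
  have hmax : (fun x => stdNormalPDF x • max 0 (z - x)) =
      (Iic z).indicator fun x => z * stdNormalPDF x - x * stdNormalPDF x := by
    funext x
    by_cases hx : x ∈ Iic z
    · rw [indicator_of_mem hx, max_eq_right (sub_nonneg.2 (mem_Iic.1 hx)), smul_eq_mul]
      ring
    · rw [indicator_of_notMem hx, max_eq_left (sub_nonpos.2 (not_le.1 hx).le), smul_zero]
  rw [integral_gaussianReal_eq_integral_smul one_ne_zero, gaussianPDFReal_zero_one, hmax,
    integral_indicator measurableSet_Iic,
    integral_sub (hpdf.const_mul z).integrableOn integrable_mul_stdNormalPDF.integrableOn,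
    integral_const_mul, integral_Iic_mul_stdNormalPDF, ← stdNormalCDF_eq_integral]
  ring

lemma gaussianReal_eq_map_mul_add (μ σ : ℝ) :
    gaussianReal μ (σ ^ 2).toNNReal = (gaussianReal 0 1).map fun x => σ * x + μ := by
  rw [← Function.comp_def (· + μ) (σ * ·),
    ← Measure.map_map (measurable_add_const μ) (measurable_const_mul σ),
    gaussianReal_map_const_mul, gaussianReal_map_add_const, mul_zero, zero_add, mul_one]
  congr
  ext
  simp [sq_nonneg]

lemma measureReal_gaussianReal_Iic (μ : ℝ) {σ : ℝ} (hσ : 0 < σ) (a : ℝ) :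
    (gaussianReal μ (σ ^ 2).toNNReal).real (Iic a) = stdNormalCDF ((a - μ) / σ) := by
  have hpre : (fun x => σ * x + μ) ⁻¹' Iic a = Iic ((a - μ) / σ) := by
    ext x
    simp only [mem_preimage, mem_Iic, le_div_iff₀ hσ]
    constructor <;> intro h <;> linarith
  rw [gaussianReal_eq_map_mul_add, measureReal_def,
    Measure.map_apply (by fun_prop) measurableSet_Iic, hpre, stdNormalCDF]

lemma integral_max_zero_sub_gaussianReal (μ : ℝ) {σ : ℝ} (hσ : 0 < σ) (a : ℝ) :
    ∫ x, max 0 (a - x) ∂gaussianReal μ (σ ^ 2).toNNReal =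
      σ * ((a - μ) / σ) * stdNormalCDF ((a - μ) / σ) + σ * stdNormalPDF ((a - μ) / σ) := by
  set z := (a - μ) / σ
  have hscale (x : ℝ) : max 0 (a - (σ * x + μ)) = σ * max 0 (z - x) := by
    rw [mul_max_of_nonneg _ _ hσ.le, mul_zero, mul_sub, mul_div_cancel₀ _ hσ.ne']
    ring_nf
  rw [gaussianReal_eq_map_mul_add, integral_map (by fun_prop) (by fun_prop)]
  simp only [hscale, integral_const_mul, integral_max_zero_sub_gaussianReal_zero_one]
  ring

section GaussianLaw

variable {Ω : Type*} [MeasurableSpace Ω] {P : Measure Ω} {Y : Ω → ℝ} {μ σ : ℝ}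

lemma aemeasurable_of_map_eq_gaussianReal {v : ℝ≥0} (hY : P.map Y = gaussianReal μ v) :
    AEMeasurable Y P :=
  aemeasurable_of_map_neZero (by rw [hY]; infer_instance)

lemma integral_max_zero_sub_of_map_eq_gaussianReal (hσ : 0 < σ)
    (hY : P.map Y = gaussianReal μ (σ ^ 2).toNNReal) (a : ℝ) :
    ∫ ω, max 0 (a - Y ω) ∂P =
      σ * ((a - μ) / σ) * stdNormalCDF ((a - μ) / σ) + σ * stdNormalPDF ((a - μ) / σ) := by
  rw [← integral_map (f := fun x => max 0 (a - x)) (aemeasurable_of_map_eq_gaussianReal hY)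
      (by fun_prop), hY, integral_max_zero_sub_gaussianReal μ hσ]

lemma integral_indicator_Iic_of_map_eq_gaussianReal (hσ : 0 < σ)
    (hY : P.map Y = gaussianReal μ (σ ^ 2).toNNReal) (a : ℝ) :
    ∫ ω, (Iic a).indicator 1 (Y ω) ∂P = stdNormalCDF ((a - μ) / σ) := by
  rw [← integral_map (aemeasurable_of_map_eq_gaussianReal hY)
      (measurable_one.indicator measurableSet_Iic).aestronglyMeasurable,
    integral_indicator_one measurableSet_Iic, hY, measureReal_gaussianReal_Iic μ hσ]

end GaussianLaw

theorem expected_improvement_with_constraints_general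
    {Ω : Type*} [MeasurableSpace Ω] (P : Measure Ω)
    (J : ℕ) (f : Ω → ℝ) (c : Fin J → Ω → ℝ)
    (μf σf fstar : ℝ) (hσf : 0 < σf) (μc σc : Fin J → ℝ) (hσc : ∀ j, 0 < σc j)
    (X : Option (Fin J) → Ω → ℝ)
    (hX : X none = f) (hXc : ∀ j, X (some j) = c j)
    (hindep : iIndepFun X P)
    (hf : Measure.map f P = gaussianReal μf ((σf ^ 2).toNNReal))
    (hc : ∀ j, Measure.map (c j) P = gaussianReal (μc j) (((σc j) ^ 2).toNNReal)) :
    ∫ ω, (if ∀ j, c j ω ≤ 0 then max 0 (fstar - f ω) else 0) ∂P =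
      (σf * ((fstar - μf) / σf) * stdNormalCDF ((fstar - μf) / σf) +
          σf * stdNormalPDF ((fstar - μf) / σf)) *
        ∏ j, stdNormalCDF (-(μc j) / σc j) := by
  let g : Option (Fin J) → ℝ → ℝ := fun i => i.elim (fun x => max 0 (fstar - x))
    fun _ => (Iic 0).indicator 1
  have hXm (i : Option (Fin J)) : AEMeasurable (X i) P := by
    cases i
    · exact hX ▸ aemeasurable_of_map_eq_gaussianReal hf
    · exact hXc _ ▸ aemeasurable_of_map_eq_gaussianReal (hc _)
  have hgm (i : Option (Fin J)) : Measurable (g i) := by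
    cases i
    · exact (by fun_prop : Continuous fun x => max 0 (fstar - x)).measurable
    · exact measurable_one.indicator measurableSet_Iic
  have hprod (ω : Ω) : (if ∀ j, c j ω ≤ 0 then max 0 (fstar - f ω) else 0) =
      ∏ i, g i (X i ω) := by
    simp [g, Fintype.prod_option, hX, hXc, indicator_apply, Finset.prod_ite_zero]
  simp only [hprod, hindep.integral_fun_prod_comp hXm fun i => (hgm i).aestronglyMeasurable]
  simp only [Fintype.prod_option, g, Option.elim, hX, hXc,
    integral_max_zero_sub_of_map_eq_gaussianReal hσf hf,
    integral_indicator_Iic_of_map_eq_gaussianReal (hσc _) (hc _), zero_sub]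

/-- Expected improvement with constraints (Schonlau et al.): for mutually independent
Gaussians `f ~ N(μf, σf²)` and `cⱼ ~ N(μc j, (σc j)²)`, the improvement
`I = max(0, fstar - f)` if all `cⱼ ≤ 0` and `I = 0` otherwise satisfies
`E[I] = (σf z Φ(z) + σf φ(z)) ∏ⱼ Φ(-μcⱼ/σcⱼ)` with `z = (fstar - μf)/σf`. -/
theorem expected_improvement_with_constraints
    {Ω : Type*} [MeasurableSpace Ω] (P : Measure Ω) [IsProbabilityMeasure P]
    (J : ℕ) (f : Ω → ℝ) (c : Fin J → Ω → ℝ)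
    (μf σf fstar : ℝ) (hσf : 0 < σf) (μc σc : Fin J → ℝ) (hσc : ∀ j, 0 < σc j)
    (X : Option (Fin J) → Ω → ℝ)
    (hX : X none = f) (hXc : ∀ j, X (some j) = c j)
    (hindep : iIndepFun X P)
    (hf : Measure.map f P = gaussianReal μf ((σf ^ 2).toNNReal))
    (hc : ∀ j, Measure.map (c j) P = gaussianReal (μc j) (((σc j) ^ 2).toNNReal)) :
    ∫ ω, (if ∀ j, c j ω ≤ 0 then max 0 (fstar - f ω) else 0) ∂P =
      (σf * ((fstar - μf) / σf) * stdNormalCDF ((fstar - μf) / σf) +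
          σf * stdNormalPDF ((fstar - μf) / σf)) *
        ∏ j, stdNormalCDF (-(μc j) / σc j) :=
  expected_improvement_with_constraints_general P J f c μf σf fstar hσf μc σc hσc X hX hXc hindep hf
    hc
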